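/- arXiv:1808.05351 — 4 statements merged into one kernel-verified Lean document; each statement's English description precedes it below -/
import Mathlib

section
/- Suppose c satisfies the Monge condition. Let p be a feasible transportation plan and suppose there exist indices i < r and j < s with p(i,s) > 0 and p(r,j) > 0. Let δ = min(p(i,s), p(r,j)) and define p' by p'(i,j) = p(i,j) + δ, p'(r,s) = p(r,s) + δ, p'(i,s) = p(i,s) − δ, p'(r,j) = p(r,j) − δ, and p' = p elsewhere. Then p' is feasible and its cost is at most that of p. -/
private lemma sum_if_snd {n : ℕ} (P : Prop) [Decidable P] (k : Fin n) (δ : ℝ) :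
    ∑ j' : Fin n, (if P ∧ j' = k then δ else 0) = if P then δ else 0 := by
  split_ifs with h <;> simp [h]

private lemma sum_if_fst {m : ℕ} (P : Prop) [Decidable P] (k : Fin m) (δ : ℝ) :
    ∑ i' : Fin m, (if i' = k ∧ P then δ else 0) = if P then δ else 0 := by
  split_ifs with h <;> simp [h]

private lemma sum_if_mul {n : ℕ} (P : Prop) [Decidable P] (k : Fin n) (f : Fin n → ℝ)
    (δ : ℝ) : ∑ j' : Fin n, f j' * (if P ∧ j' = k then δ else 0) =
      if P then f k * δ else 0 := by
  split_ifs with h <;> simp [h, mul_ite, mul_zero, Finset.sum_ite_eq']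

theorem monge_exchange_step (m n : ℕ)
    (a : Fin m → ℝ) (b : Fin n → ℝ)
    (c : Fin m × Fin n → ℝ)
    (hmonge : ∀ i r : Fin m, ∀ j s : Fin n, i < r → j < s →
      c (i, j) + c (r, s) ≤ c (i, s) + c (r, j))
    (p : Fin m × Fin n → ℝ) (hp0 : ∀ i j, 0 ≤ p (i, j))
    (hrow : ∀ i, ∑ j, p (i, j) = a i) (hcol : ∀ j, ∑ i, p (i, j) = b j)
    (i r : Fin m) (j s : Fin n) (hir : i < r) (hjs : j < s)
    (his : 0 < p (i, s)) (hrj : 0 < p (r, j))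
    (δ : ℝ) (hδ : δ = min (p (i, s)) (p (r, j)))
    (p' : Fin m × Fin n → ℝ)
    (hp' : ∀ q, p' q = p q + (if q = (i, j) then δ else 0) +
        (if q = (r, s) then δ else 0) - (if q = (i, s) then δ else 0) -
        (if q = (r, j) then δ else 0)) :
    (∀ i' j', 0 ≤ p' (i', j')) ∧ (∀ i', ∑ j', p' (i', j') = a i') ∧
    (∀ j', ∑ i', p' (i', j') = b j') ∧
    (∑ i', ∑ j', c (i', j') * p' (i', j')) ≤ ∑ i', ∑ j', c (i', j') * p (i', j') := by
  have hirne : i ≠ r := ne_of_lt hir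
  have hjsne : j ≠ s := ne_of_lt hjs
  have hδ0 : 0 ≤ δ := by rw [hδ]; exact le_min his.le hrj.le
  have hδ1 : δ ≤ p (i, s) := by rw [hδ]; exact min_le_left _ _
  have hδ2 : δ ≤ p (r, j) := by rw [hδ]; exact min_le_right _ _
  clear hδ
  refine ⟨?_, ?_, ?_, ?_⟩
  · intro i' j'
    rw [hp']
    rcases eq_or_ne (i', j') (i, j) with h1 | h1 <;>
      rcases eq_or_ne (i', j') (r, s) with h2 | h2 <;>
      rcases eq_or_ne (i', j') (i, s) with h3 | h3 <;>
      rcases eq_or_ne (i', j') (r, j) with h4 | h4 <;>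
      simp_all [Prod.ext_iff] <;>
      try linarith [hp0 i j, hp0 i s, hp0 r j, hp0 r s, hp0 i' j']
    all_goals
      split_ifs <;> simp_all
  · intro i'
    have key : ∀ j', p' (i', j') = p (i', j') + (if i' = i ∧ j' = j then δ else 0)
        + (if i' = r ∧ j' = s then δ else 0) - (if i' = i ∧ j' = s then δ else 0)
        - (if i' = r ∧ j' = j then δ else 0) := by
      intro j'; rw [hp']; simp only [Prod.mk.injEq]
    rw [Finset.sum_congr rfl fun j' _ => key j']
    simp only [Finset.sum_add_distrib, Finset.sum_sub_distrib, sum_if_snd, hrow]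
    ring
  · intro j'
    have key : ∀ i', p' (i', j') = p (i', j') + (if i' = i ∧ j' = j then δ else 0)
        + (if i' = r ∧ j' = s then δ else 0) - (if i' = i ∧ j' = s then δ else 0)
        - (if i' = r ∧ j' = j then δ else 0) := by
      intro i'; rw [hp']; simp only [Prod.mk.injEq]
    rw [Finset.sum_congr rfl fun i' _ => key i']
    simp only [Finset.sum_add_distrib, Finset.sum_sub_distrib, sum_if_fst, hcol]
    ring
  · have key : ∀ i' j', c (i', j') * p' (i', j') =
        c (i', j') * p (i', j')
        + c (i', j') * (if i' = i ∧ j' = j then δ else 0)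
        + c (i', j') * (if i' = r ∧ j' = s then δ else 0)
        - c (i', j') * (if i' = i ∧ j' = s then δ else 0)
        - c (i', j') * (if i' = r ∧ j' = j then δ else 0) := by
      intro i' j'; rw [hp']; simp only [Prod.mk.injEq]; ring
    have inner : ∀ i', ∑ j', c (i', j') * p' (i', j') =
        (∑ j', c (i', j') * p (i', j'))
        + (if i' = i then c (i', j) * δ else 0)
        + (if i' = r then c (i', s) * δ else 0)
        - (if i' = i then c (i', s) * δ else 0)
        - (if i' = r then c (i', j) * δ else 0) := by
      intro i'
      rw [Finset.sum_congr rfl fun j' _ => key i' j']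
      simp only [Finset.sum_add_distrib, Finset.sum_sub_distrib,
        sum_if_mul (P := i' = i) j (fun j' => c (i', j')) δ,
        sum_if_mul (P := i' = r) s (fun j' => c (i', j')) δ,
        sum_if_mul (P := i' = i) s (fun j' => c (i', j')) δ,
        sum_if_mul (P := i' = r) j (fun j' => c (i', j')) δ]
    rw [Finset.sum_congr rfl fun i' _ => inner i']
    simp only [Finset.sum_add_distrib, Finset.sum_sub_distrib, Finset.sum_ite_eq']
    simp only [Finset.mem_univ, if_true]
    nlinarith [hmonge i r j s hir hjs]
end

section
/- Weighted König–Egerváry theorem: Let C be an m × n matrix of blocks with positive integer row weights a₁,...,aₘ and column weights b₁,...,bₙ, and let Ω be a nonempty set of blocks (positions). Then the maximum total 'capacity' of a set of blocks in Ω forming a fractional matching respecting the weights (equivalently, the maximum size of a matching in the expanded bipartite graph where row i is split into aᵢ copies and column j into bⱼ copies, with edges corresponding to blocks of Ω) equals the minimum total weight of a set of rows and columns covering all blocks of Ω. -/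
/-! Take a cover `(R, S)` of minimum weight. By minimality the rows of `R` satisfy a weighted
Hall condition towards the columns outside `S`, so Hall's theorem matches every copy of a row
of `R` to a copy of a column outside `S`; symmetrically every copy of a column of `S` is
matched to a copy of a row outside `R`. The two matchings use disjoint vertices, so together
they form a matching of size the weight of the cover. Conversely every edge of a matching has
an endpoint lying over a given cover, and distinct edges have distinct such endpoints. -/

/-- A matching in the expanded bipartite graph: edges join copies of rows and
copies of columns, an edge is allowed iff its (row, column) block lies in `Ω`,
and no two chosen edges share an endpoint. -/
def IsExpandedMatching {m n : ℕ} (a : Fin m → ℕ+) (b : Fin n → ℕ+)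
    (Ω : Set (Fin m × Fin n))
    (M : Finset ((Σ i : Fin m, Fin (a i)) × (Σ j : Fin n, Fin (b j)))) : Prop :=
  (∀ e ∈ M, (e.1.1, e.2.1) ∈ Ω) ∧
  (∀ e ∈ M, ∀ f ∈ M, e.1 = f.1 → e = f) ∧
  (∀ e ∈ M, ∀ f ∈ M, e.2 = f.2 → e = f)

/-- A cover of `Ω` by rows `R` and columns `S`. -/
def IsBlockCover {m n : ℕ} (Ω : Set (Fin m × Fin n))
    (R : Finset (Fin m)) (S : Finset (Fin n)) : Prop :=
  ∀ q ∈ Ω, q.1 ∈ R ∨ q.2 ∈ S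

open Finset Function

section Copies

variable {I : Type*} (a : I → ℕ)

/-- The vertices of the expanded graph lying over `R`. -/
def copies (R : Finset I) : Finset (Σ i, Fin (a i)) :=
  R.sigma fun _ => univ

variable {a}

@[simp]
lemma mem_copies {R : Finset I} {v : Σ i, Fin (a i)} : v ∈ copies a R ↔ v.1 ∈ R := by
  simp [copies]

@[simp]
lemma card_copies (R : Finset I) : #(copies a R) = ∑ i ∈ R, a i := by
  simp [copies]

/-- A set of copies lying over rows `T` has at most `∑ i ∈ T, a i` elements and sees every copy
of every neighbour of `T`, so the weighted Hall condition implies Hall's condition for copies. -/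
lemma exists_injective_copies_of_weighted_hall {J : Type*} [DecidableEq J] {b : J → ℕ}
    {N : I → Finset J} {R : Finset I}
    (hall : ∀ T ⊆ R, ∑ i ∈ T, a i ≤ ∑ j ∈ T.biUnion N, b j) :
    ∃ f : copies a R → Σ j, Fin (b j), Injective f ∧ ∀ v, (f v).1 ∈ N v.1.1 := by
  classical
  suffices ∀ A : Finset (copies a R), #A ≤ #(A.biUnion fun v => copies b (N v.1.1)) by
    obtain ⟨f, hf_inj, hf⟩ := (all_card_le_biUnion_card_iff_exists_injective _).mp this
    exact ⟨f, hf_inj, fun v => mem_copies.mp (hf v)⟩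
  intro A
  set T := A.image fun v => v.1.1
  calc #A = #(A.map (Embedding.subtype _)) := (card_map _).symm
    _ ≤ #(copies a T) := card_le_card fun v hv => by
      obtain ⟨w, hw, rfl⟩ := mem_map.mp hv
      exact mem_copies.mpr (mem_image_of_mem _ hw)
    _ ≤ #(copies b (T.biUnion N)) := by
      simpa using hall T fun i hi => by
        obtain ⟨v, -, rfl⟩ := mem_image.mp hi
        exact mem_copies.mp v.2
    _ ≤ #(A.biUnion fun v => copies b (N v.1.1)) := card_le_card fun w hw => by
      obtain ⟨i, hi, hwi⟩ := mem_biUnion.mp (mem_copies.mp hw)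
      obtain ⟨v, hv, rfl⟩ := mem_image.mp hi
      exact mem_biUnion.mpr ⟨v, hv, mem_copies.mpr hwi⟩

end Copies

section Covers

variable {m n : ℕ} {a : Fin m → ℕ+} {b : Fin n → ℕ+} {Ω : Set (Fin m × Fin n)}
  {R : Finset (Fin m)} {S : Finset (Fin n)}

variable (a b) in
def coverWeight (R : Finset (Fin m)) (S : Finset (Fin n)) : ℕ :=
  ∑ i ∈ R, (a i : ℕ) + ∑ j ∈ S, (b j : ℕ)

variable (a b) in
def IsMinBlockCover (Ω : Set (Fin m × Fin n)) (R : Finset (Fin m)) (S : Finset (Fin n)) : Prop :=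
  IsBlockCover Ω R S ∧
    ∀ R' S', IsBlockCover Ω R' S' → coverWeight a b R S ≤ coverWeight a b R' S'

variable (a b Ω) in
lemma exists_isMinBlockCover : ∃ R S, IsMinBlockCover a b Ω R S := by
  classical
  obtain ⟨⟨R, S⟩, hRS, hmin⟩ := exists_min_image
    {p : Finset (Fin m) × Finset (Fin n) | IsBlockCover Ω p.1 p.2}
    (fun p => coverWeight a b p.1 p.2) ⟨(univ, ∅), by simp [IsBlockCover]⟩
  exact ⟨R, S, (mem_filter.mp hRS).2, fun R' S' h => hmin (R', S') (by simpa using h)⟩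

lemma IsBlockCover.swap (h : IsBlockCover Ω R S) : IsBlockCover (Prod.swap ⁻¹' Ω) S R :=
  fun q hq => (h q.swap hq).symm

lemma IsMinBlockCover.swap (h : IsMinBlockCover a b Ω R S) :
    IsMinBlockCover b a (Prod.swap ⁻¹' Ω) S R := by
  refine ⟨h.1.swap, fun S' R' h' => ?_⟩
  have := h.2 R' S' (by simpa [Set.preimage_preimage] using h'.swap)
  simpa [coverWeight, add_comm] using this

lemma IsExpandedMatching.card_le_coverWeight
    {M : Finset ((Σ i : Fin m, Fin (a i)) × (Σ j : Fin n, Fin (b j)))}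
    (hM : IsExpandedMatching a b Ω M) (hRS : IsBlockCover Ω R S) :
    #M ≤ coverWeight a b R S := by
  classical
  calc #M ≤ #((copies (fun i => (a i : ℕ)) R).disjSum (copies (fun j => (b j : ℕ)) S)) := by
        refine card_le_card_of_injOn (fun e => if e.1.1 ∈ R then .inl e.1 else .inr e.2) ?_ ?_
        · intro e he
          by_cases h : e.1.1 ∈ R
          · simp [h]
          · simp [h, (hRS _ (hM.1 e he)).resolve_left h]
        · intro e he f hf hef
          by_cases he1 : e.1.1 ∈ R <;> by_cases hf1 : f.1.1 ∈ R <;>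
            simp only [he1, hf1, if_true, if_false, Sum.inl.injEq, Sum.inr.injEq,
              reduceCtorEq] at hef
          · exact hM.2.1 e he f hf hef
          · exact hM.2.2 e he f hf hef
    _ = coverWeight a b R S := by simp [coverWeight]

/-- Rows of `R` satisfy the weighted Hall condition towards the columns outside `S`: otherwise
trading a violating set `T` of rows for its neighbours outside `S` gives a lighter cover. -/
lemma IsMinBlockCover.weighted_hall (h : IsMinBlockCover a b Ω R S) {N : Fin m → Finset (Fin n)}
    (hN : ∀ i j, j ∈ N i ↔ j ∉ S ∧ (i, j) ∈ Ω) {T : Finset (Fin m)} (hT : T ⊆ R) :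
    ∑ i ∈ T, (a i : ℕ) ≤ ∑ j ∈ T.biUnion N, (b j : ℕ) := by
  classical
  have hcover : IsBlockCover Ω (R \ T) (S ∪ T.biUnion N) := by
    rintro ⟨i, j⟩ hij
    by_cases hiT : i ∈ T
    · by_cases hjS : j ∈ S
      · exact .inr (mem_union_left _ hjS)
      · exact .inr (mem_union_right _ (mem_biUnion.mpr ⟨i, hiT, (hN i j).mpr ⟨hjS, hij⟩⟩))
    · rcases h.1 _ hij with hi | hj
      · exact .inl (mem_sdiff.mpr ⟨hi, hiT⟩)
      · exact .inr (mem_union_left _ hj)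
  have hdisj : Disjoint S (T.biUnion N) := disjoint_right.mpr fun j hj => by
    obtain ⟨i, -, hji⟩ := mem_biUnion.mp hj
    exact ((hN i j).mp hji).1
  have hmin := h.2 _ _ hcover
  have hsplit := sum_sdiff (f := fun i => (a i : ℕ)) hT
  simp only [coverWeight, sum_union hdisj] at hmin
  omega

lemma IsMinBlockCover.exists_injective_rows (h : IsMinBlockCover a b Ω R S) :
    ∃ f : copies (fun i => (a i : ℕ)) R → Σ j, Fin (b j),
      Injective f ∧ ∀ v, (f v).1 ∉ S ∧ (v.1.1, (f v).1) ∈ Ω := by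
  classical
  let N i : Finset (Fin n) := {j | j ∉ S ∧ (i, j) ∈ Ω}
  have hN i j : j ∈ N i ↔ j ∉ S ∧ (i, j) ∈ Ω := by simp [N]
  obtain ⟨f, hf_inj, hf⟩ := exists_injective_copies_of_weighted_hall (b := fun j => (b j : ℕ))
    fun T hT => h.weighted_hall hN hT
  exact ⟨f, hf_inj, fun v => (hN _ _).mp (hf v)⟩

lemma isExpandedMatching_image_of_injective {X : Type*} [Fintype X]
    {p : X → Σ i : Fin m, Fin (a i)} {q : X → Σ j : Fin n, Fin (b j)}
    (hp : Injective p) (hq : Injective q) (hΩ : ∀ x, ((p x).1, (q x).1) ∈ Ω) :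
    IsExpandedMatching a b Ω (univ.image fun x => (p x, q x)) := by
  refine ⟨?_, ?_, ?_⟩ <;> simp only [mem_image, mem_univ, true_and, forall_exists_index,
    forall_apply_eq_imp_iff]
  · exact hΩ
  · exact fun x y hxy => by rw [hp hxy]
  · exact fun x y hxy => by rw [hq hxy]

lemma IsMinBlockCover.exists_isExpandedMatching (h : IsMinBlockCover a b Ω R S) :
    ∃ M, IsExpandedMatching a b Ω M ∧ #M = coverWeight a b R S := by
  classical
  obtain ⟨f, hf_inj, hf⟩ := h.exists_injective_rows
  obtain ⟨g, hg_inj, hg⟩ := h.swap.exists_injective_rows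
  let p : copies _ R ⊕ copies _ S → Σ i, Fin (a i) := Sum.elim Subtype.val g
  let q : copies _ R ⊕ copies _ S → Σ j, Fin (b j) := Sum.elim f Subtype.val
  have hp : Injective p := Subtype.val_injective.sumElim hg_inj fun v w hvw =>
    (hg w).1 (hvw ▸ mem_copies.mp v.2)
  have hq : Injective q := hf_inj.sumElim Subtype.val_injective fun v w hvw =>
    (hf v).1 (hvw ▸ mem_copies.mp w.2)
  refine ⟨_, isExpandedMatching_image_of_injective hp hq ?_, ?_⟩
  · rintro (v | w)
    exacts [(hf v).2, (hg w).2]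
  · rw [card_image_of_injective _ fun x y hxy => hp (congrArg Prod.fst hxy), card_univ,
      Fintype.card_sum, Fintype.card_coe, Fintype.card_coe, card_copies, card_copies]
    rfl

end Covers

theorem weighted_koenig_egervary_general (m n : ℕ)
    (a : Fin m → ℕ+) (b : Fin n → ℕ+)
    (Ω : Set (Fin m × Fin n)) :
    ∃ w : ℕ,
      IsGreatest {k : ℕ | ∃ M, IsExpandedMatching a b Ω M ∧ M.card = k} w ∧
      IsLeast {t : ℕ | ∃ R S, IsBlockCover Ω R S ∧
        (∑ i ∈ R, (a i : ℕ)) + (∑ j ∈ S, (b j : ℕ)) = t} w := by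
  obtain ⟨R, S, hmin⟩ := exists_isMinBlockCover a b Ω
  refine ⟨coverWeight a b R S, ⟨hmin.exists_isExpandedMatching, ?_⟩,
    ⟨R, S, hmin.1, rfl⟩, ?_⟩
  · rintro _ ⟨M, hM, rfl⟩
    exact hM.card_le_coverWeight hmin.1
  · rintro _ ⟨R', S', hcover, rfl⟩
    exact hmin.2 R' S' hcover

theorem weighted_koenig_egervary (m n : ℕ)
    (a : Fin m → ℕ+) (b : Fin n → ℕ+)
    (Ω : Set (Fin m × Fin n)) (hΩ : Ω.Nonempty) :
    ∃ w : ℕ,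
      IsGreatest {k : ℕ | ∃ M, IsExpandedMatching a b Ω M ∧ M.card = k} w ∧
      IsLeast {t : ℕ | ∃ R S, IsBlockCover Ω R S ∧
        (∑ i ∈ R, (a i : ℕ)) + (∑ j ∈ S, (b j : ℕ)) = t} w :=
  weighted_koenig_egervary_general m n a b Ω
end

section
/- König's theorem for bipartite position sets: for a nonempty set S of positions of an n × n matrix, the maximum number of pairwise independent positions in S (no two sharing a row or column) equals the minimum number of lines (rows and columns) needed to cover all positions of S. -/
open Sum in
private lemma koenig_weak {n : ℕ} {S : Set (Fin n × Fin n)}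
    (M : Finset (Fin n × Fin n)) (hMS : (↑M : Set _) ⊆ S)
    (hind : ∀ p ∈ M, ∀ q ∈ M, p ≠ q → p.1 ≠ q.1 ∧ p.2 ≠ q.2)
    (R C : Finset (Fin n)) (hcov : ∀ p ∈ S, p.1 ∈ R ∨ p.2 ∈ C) :
    M.card ≤ R.card + C.card := by
  classical
  rw [← Finset.card_disjSum]
  apply Finset.card_le_card_of_injOn
    (fun p => if p.1 ∈ R then inl p.1 else inr p.2)
  · intro p hp
    by_cases h : p.1 ∈ R
    · simp [h]
    · have := hcov p (hMS hp)
      have hc : p.2 ∈ C := by tauto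
      simp [h, hc]
  · intro p hp q hq h
    by_contra hne
    have hpq := hind p hp q hq hne
    by_cases h1 : p.1 ∈ R <;> by_cases h2 : q.1 ∈ R <;>
      simp [h1, h2] at h <;> tauto

theorem koenig_positions (n : ℕ) (S : Set (Fin n × Fin n)) (hS : S.Nonempty) :
    ∃ w : ℕ,
      IsGreatest {k : ℕ | ∃ M : Finset (Fin n × Fin n), (↑M : Set _) ⊆ S ∧
        (∀ p ∈ M, ∀ q ∈ M, p ≠ q → p.1 ≠ q.1 ∧ p.2 ≠ q.2) ∧ M.card = k} w ∧
      IsLeast {t : ℕ | ∃ R C : Finset (Fin n),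
        (∀ p ∈ S, p.1 ∈ R ∨ p.2 ∈ C) ∧ R.card + C.card = t} w := by
  classical
  obtain ⟨p0, hp0⟩ := hS
  have hn : 0 < n := p0.1.pos
  -- neighborhood finsets
  set t : Fin n → Finset (Fin n) :=
    fun i => Finset.univ.filter (fun j => (i, j) ∈ S) with ht
  -- max deficiency
  set d : ℕ :=
    Finset.univ.sup (fun A : Finset (Fin n) => A.card - (A.biUnion t).card) with hd
  have hdle : ∀ A : Finset (Fin n), A.card - (A.biUnion t).card ≤ d :=
    fun A => Finset.le_sup (f := fun A : Finset (Fin n) => A.card - (A.biUnion t).card) (Finset.mem_univ A)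
  -- a deficiency witness A* with N(A*) small
  obtain ⟨A, hAcard, hAle⟩ :
      ∃ A : Finset (Fin n), A.card - (A.biUnion t).card = d ∧
        (A.biUnion t).card ≤ A.card := by
    rcases Nat.eq_zero_or_pos d with h0 | hpos
    · exact ⟨∅, by simp [h0], by simp⟩
    · obtain ⟨A, -, hA⟩ := Finset.exists_mem_eq_sup Finset.univ
        ⟨∅, Finset.mem_univ ∅⟩ (fun A : Finset (Fin n) => A.card - (A.biUnion t).card)
      refine ⟨A, hA.symm, ?_⟩
      omega
  -- the cover built from A*
  set R : Finset (Fin n) := Finset.univ \ A with hR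
  set C : Finset (Fin n) := A.biUnion t with hC
  have hcov : ∀ p ∈ S, p.1 ∈ R ∨ p.2 ∈ C := by
    intro p hp
    by_cases h : p.1 ∈ A
    · right
      exact Finset.mem_biUnion.2 ⟨p.1, h, by simp [ht, hp]⟩
    · left
      simp [hR, h]
  have hAn : A.card ≤ n := by
    simpa using Finset.card_le_univ A
  have hcovcard : R.card + C.card = n - d := by
    have : R.card = n - A.card := by
      simp [hR, Finset.card_sdiff_of_subset (Finset.subset_univ A)]
    omega
  -- Hall's theorem on the augmented graph
  set t' : Fin n → Finset (Fin n ⊕ Fin d) :=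
    fun i => (t i).disjSum Finset.univ with ht'
  have hall : ∀ s : Finset (Fin n), s.card ≤ (s.biUnion t').card := by
    intro s
    rcases s.eq_empty_or_nonempty with rfl | hne
    · simp
    · have hsub : (s.biUnion t).disjSum (Finset.univ : Finset (Fin d)) ⊆
          s.biUnion t' := by
        intro x hx
        rw [Finset.mem_disjSum] at hx
        rcases hx with ⟨a, ha, rfl⟩ | ⟨b, hb, rfl⟩
        · obtain ⟨i, hi, hai⟩ := Finset.mem_biUnion.1 ha
          exact Finset.mem_biUnion.2 ⟨i, hi, by simp [ht', hai]⟩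
        · obtain ⟨i, hi⟩ := hne
          exact Finset.mem_biUnion.2 ⟨i, hi, by simp [ht']⟩
      have := Finset.card_le_card hsub
      rw [Finset.card_disjSum] at this
      have hds := hdle s
      simp at this
      omega
  obtain ⟨f, hfinj, hft⟩ :=
    (Finset.all_card_le_biUnion_card_iff_exists_injective t').1 hall
  -- extract the matching
  set L : Finset (Fin n) := Finset.univ.filter (fun i => (f i).isLeft) with hL
  have hnL : (Finset.univ \ L).card ≤ d := by
    have h1 : (Finset.univ \ L).card ≤
        ((Finset.univ : Finset (Fin d)).image (Sum.inr : Fin d → Fin n ⊕ Fin d)).card := by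
      apply Finset.card_le_card_of_injOn (t := (Finset.univ : Finset (Fin d)).image (Sum.inr : Fin d → Fin n ⊕ Fin d)) f
      · intro i hi
        simp only [hL, Finset.mem_sdiff, Finset.mem_filter, Finset.mem_univ,
          true_and, not_and] at hi
        rcases h : f i with j | y
        · simp [h] at hi
        · simp [h]
      · exact hfinj.injOn
    have h2 : ((Finset.univ : Finset (Fin d)).image (Sum.inr : Fin d → Fin n ⊕ Fin d)).card = d := by
      rw [Finset.card_image_of_injective _ Sum.inr_injective]; simp
    omega
  set g : Fin n → Fin n := fun i => Sum.elim id (fun _ => p0.2) (f i) with hg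
  have hgL : ∀ i ∈ L, f i = Sum.inl (g i) := by
    intro i hi
    simp only [hL, Finset.mem_filter] at hi
    rcases h : f i with j | y
    · simp [hg, h]
    · simp [h] at hi
  set M : Finset (Fin n × Fin n) := L.image (fun i => (i, g i)) with hM
  have hMcard : M.card = L.card :=
    Finset.card_image_of_injOn (fun a _ b _ h => (Prod.ext_iff.1 h).1)
  have hLcard : n - d ≤ L.card := by
    have := Finset.card_sdiff_add_card_eq_card (Finset.subset_univ L)
    simp at this
    omega
  have hMS : (↑M : Set _) ⊆ S := by
    intro p hp
    simp only [hM, Finset.coe_image, Set.mem_image, Finset.mem_coe] at hp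
    obtain ⟨i, hi, rfl⟩ := hp
    have := hft i
    rw [hgL i hi] at this
    simp only [ht', Finset.inl_mem_disjSum, ht, Finset.mem_filter] at this
    exact this.2
  have hMind : ∀ p ∈ M, ∀ q ∈ M, p ≠ q → p.1 ≠ q.1 ∧ p.2 ≠ q.2 := by
    intro p hp q hq hne
    simp only [hM, Finset.mem_image] at hp hq
    obtain ⟨i, hi, rfl⟩ := hp
    obtain ⟨i', hi', rfl⟩ := hq
    have hii : i ≠ i' := fun h => hne (by rw [h])
    refine ⟨hii, fun h => hii (hfinj ?_)⟩
    rw [hgL i hi, hgL i' hi']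
    simpa using h
  -- weak duality gives exact card
  have hweak := koenig_weak M hMS hMind R C hcov
  have hMn : M.card = n - d := by omega
  refine ⟨n - d, ⟨⟨M, hMS, hMind, hMn⟩, ?_⟩, ⟨R, C, hcov, hcovcard⟩, ?_⟩
  · rintro k ⟨M', hM'S, hM'ind, rfl⟩
    have := koenig_weak M' hM'S hM'ind R C hcov
    omega
  · rintro k ⟨R', C', hcov', rfl⟩
    have := koenig_weak M hMS hMind R' C' hcov'
    omega
end

section
/- In the expanded cost matrix C̃ of size η × η (where η = Σ aᵢ = Σ bⱼ) obtained by repeating row i of C exactly aᵢ times and column j exactly bⱼ times, the minimum cost of a perfect assignment (permutation σ of Fin η minimizing Σₚ C̃(p, σ(p))) equals the minimum cost of the balanced transportation problem with cost C, supplies a, and demands b. -/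
def packA {m n : ℕ} (x : Fin m × Fin n → ℕ) :
    (Σ i : Fin m, Σ j : Fin n, Fin (x (i, j))) ≃ Σ ij : Fin m × Fin n, Fin (x ij) where
  toFun t := ⟨(t.1, t.2.1), t.2.2⟩
  invFun t := ⟨t.1.1, t.1.2, t.2⟩
  left_inv := fun ⟨_, _, _⟩ => rfl
  right_inv := fun ⟨⟨_, _⟩, _⟩ => rfl

def packB {m n : ℕ} (x : Fin m × Fin n → ℕ) :
    (Σ j : Fin n, Σ i : Fin m, Fin (x (i, j))) ≃ Σ ij : Fin m × Fin n, Fin (x ij) where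
  toFun t := ⟨(t.2.1, t.1), t.2.2⟩
  invFun t := ⟨t.1.2, t.1.1, t.2⟩
  left_inv := fun ⟨_, _, _⟩ => rfl
  right_inv := fun ⟨⟨_, _⟩, _⟩ => rfl

theorem key {m n η : ℕ} (ri : Fin η → Fin m) (cj : Fin η → Fin n)
    (x : Fin m × Fin n → ℕ)
    (hrow : ∀ i, (Finset.univ.filter fun p => ri p = i).card = ∑ j, x (i, j))
    (hcol : ∀ j, (Finset.univ.filter fun q => cj q = j).card = ∑ i, x (i, j)) :
    ∃ σ : Equiv.Perm (Fin η), ∃ h : Fin η ≃ Σ ij : Fin m × Fin n, Fin (x ij),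
      (∀ p, ri p = (h p).1.1) ∧ (∀ p, cj (σ p) = (h p).1.2) := by
  have eA : ∀ i : Fin m, {p // ri p = i} ≃ Σ j : Fin n, Fin (x (i, j)) := fun i =>
    Fintype.equivOfCardEq (by rw [Fintype.card_subtype, hrow i, Fintype.card_sigma]; simp)
  have eB : ∀ j : Fin n, {q // cj q = j} ≃ Σ i : Fin m, Fin (x (i, j)) := fun j =>
    Fintype.equivOfCardEq (by rw [Fintype.card_subtype, hcol j, Fintype.card_sigma]; simp)
  let hA : Fin η ≃ Σ ij : Fin m × Fin n, Fin (x ij) :=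
    ((Equiv.sigmaFiberEquiv ri).symm.trans (Equiv.sigmaCongrRight eA)).trans (packA x)
  let hB : Fin η ≃ Σ ij : Fin m × Fin n, Fin (x ij) :=
    ((Equiv.sigmaFiberEquiv cj).symm.trans (Equiv.sigmaCongrRight eB)).trans (packB x)
  refine ⟨hA.trans hB.symm, hA, fun p => rfl, fun p => ?_⟩
  have h1 : ∀ q, cj q = (hB q).1.2 := fun q => rfl
  rw [h1]
  simp [Equiv.apply_symm_apply]

theorem expanded_assignment_eq_transportation (m n η : ℕ)
    (a : Fin m → ℕ) (b : Fin n → ℕ) (ha : ∀ i, 0 < a i) (hb : ∀ j, 0 < b j)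
    (haη : ∑ i, a i = η) (hbη : ∑ j, b j = η)
    (C : Fin m × Fin n → ℝ)
    -- `ri p` is the row block containing position `p`; blocks are consecutive
    -- (monotone) and block `i` has size `a i`.  Similarly for columns.
    (ri : Fin η → Fin m) (cj : Fin η → Fin n)
    (hri : Monotone ri) (hcj : Monotone cj)
    (hricard : ∀ i, (Finset.univ.filter fun p => ri p = i).card = a i)
    (hcjcard : ∀ j, (Finset.univ.filter fun q => cj q = j).card = b j)
    (Ctilde : Fin η × Fin η → ℝ)
    (hCt : ∀ p q, Ctilde (p, q) = C (ri p, cj q)) :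
    ∃ v : ℝ,
      IsLeast {t : ℝ | ∃ σ : Equiv.Perm (Fin η), t = ∑ p, Ctilde (p, σ p)} v ∧
      IsLeast {t : ℝ | ∃ x : Fin m × Fin n → ℕ,
        (∀ i, ∑ j, x (i, j) = a i) ∧ (∀ j, ∑ i, x (i, j) = b j) ∧
        t = ∑ i, ∑ j, C (i, j) * (x (i, j) : ℝ)} v := by
  classical
  set S1 := {t : ℝ | ∃ σ : Equiv.Perm (Fin η), t = ∑ p, Ctilde (p, σ p)} with hS1
  set S2 := {t : ℝ | ∃ x : Fin m × Fin n → ℕ,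
      (∀ i, ∑ j, x (i, j) = a i) ∧ (∀ j, ∑ i, x (i, j) = b j) ∧
      t = ∑ i, ∑ j, C (i, j) * (x (i, j) : ℝ)} with hS2
  -- Direction 1: every assignment cost is a transportation cost
  have h12 : S1 ⊆ S2 := by
    rintro t ⟨σ, rfl⟩
    refine ⟨fun ij => (Finset.univ.filter fun p => ri p = ij.1 ∧ cj (σ p) = ij.2).card,
      ?_, ?_, ?_⟩
    · intro i
      rw [← hricard i]
      rw [Finset.card_eq_sum_card_fiberwise
        (f := fun p => cj (σ p)) (t := Finset.univ) (fun _ _ => Finset.mem_univ _)]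
      simp [Finset.filter_filter]
    · intro j
      have step1 : ∑ i, (Finset.univ.filter fun p => ri p = i ∧ cj (σ p) = j).card
          = (Finset.univ.filter fun p => cj (σ p) = j).card := by
        rw [Finset.card_eq_sum_card_fiberwise
          (f := fun p => ri p) (t := Finset.univ) (fun _ _ => Finset.mem_univ _)]
        simp [Finset.filter_filter, and_comm]
      have step2 : (Finset.univ.filter fun p => cj (σ p) = j).card
          = (Finset.univ.filter fun q => cj q = j).card := by
        rw [← Fintype.card_subtype, ← Fintype.card_subtype]
        exact Fintype.card_congr (σ.subtypeEquiv fun p => Iff.rfl)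
      rw [step1, step2, hcjcard j]
    · have hfib := Finset.sum_fiberwise_of_maps_to
        (s := (Finset.univ : Finset (Fin η))) (g := fun p : Fin η => (ri p, cj (σ p))) (t := (Finset.univ : Finset (Fin m × Fin n)))
        (fun _ _ => Finset.mem_univ _) (fun p => C (ri p, cj (σ p)))
      have : ∑ p, Ctilde (p, σ p) = ∑ p, C (ri p, cj (σ p)) := by
        simp [hCt]
      rw [this, ← hfib, Fintype.sum_prod_type]
      refine Finset.sum_congr rfl fun i _ => Finset.sum_congr rfl fun j _ => ?_
      have hset : (Finset.univ.filter fun p => (ri p, cj (σ p)) = (i, j))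
          = Finset.univ.filter fun p => ri p = i ∧ cj (σ p) = j := by
        apply Finset.filter_congr
        intro p _
        simp [Prod.ext_iff]
      rw [hset]
      have hterm : ∑ p ∈ Finset.univ.filter (fun p => ri p = i ∧ cj (σ p) = j),
            C (ri p, cj (σ p))
          = ∑ _p ∈ Finset.univ.filter (fun p => ri p = i ∧ cj (σ p) = j), C (i, j) := by
        apply Finset.sum_congr rfl
        intro p hp
        simp only [Finset.mem_filter] at hp
        rw [hp.2.1, hp.2.2]
      rw [hterm, Finset.sum_const, nsmul_eq_mul, mul_comm]
  -- Direction 2: every transportation cost is an assignment cost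
  have h21 : S2 ⊆ S1 := by
    rintro t ⟨x, hx1, hx2, rfl⟩
    obtain ⟨σ, h, hh1, hh2⟩ := key ri cj x
      (fun i => by rw [hricard i, hx1 i]) (fun j => by rw [hcjcard j, hx2 j])
    refine ⟨σ, ?_⟩
    have : ∑ p, Ctilde (p, σ p) = ∑ p, C ((h p).1.1, (h p).1.2) := by
      refine Finset.sum_congr rfl fun p _ => ?_
      rw [hCt, hh1 p, hh2 p]
    rw [this]
    have : ∑ p, C ((h p).1.1, (h p).1.2)
        = ∑ t : Σ ij : Fin m × Fin n, Fin (x ij), C (t.1.1, t.1.2) :=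
      Equiv.sum_comp h (fun t => C (t.1.1, t.1.2))
    rw [this, ← Finset.univ_sigma_univ, Finset.sum_sigma]
    simp [Finset.sum_const, nsmul_eq_mul, Fintype.sum_prod_type, mul_comm]
  have hEq : S1 = S2 := subset_antisymm h12 h21
  -- minimum of S1
  let F : Finset ℝ := Finset.univ.image fun σ : Equiv.Perm (Fin η) => ∑ p, Ctilde (p, σ p)
  have hFne : F.Nonempty := ⟨∑ p, Ctilde (p, (1 : Equiv.Perm (Fin η)) p),
    Finset.mem_image_of_mem _ (Finset.mem_univ 1)⟩
  refine ⟨F.min' hFne, ?_, ?_⟩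
  · constructor
    · have := F.min'_mem hFne
      simp only [F, Finset.mem_image, Finset.mem_univ, true_and] at this
      obtain ⟨σ, hσ⟩ := this
      exact ⟨σ, hσ.symm⟩
    · rintro t ⟨σ, rfl⟩
      exact F.min'_le _ (Finset.mem_image_of_mem _ (Finset.mem_univ σ))
  · rw [← hEq]
    constructor
    · have := F.min'_mem hFne
      simp only [F, Finset.mem_image, Finset.mem_univ, true_and] at this
      obtain ⟨σ, hσ⟩ := this
      exact ⟨σ, hσ.symm⟩
    · rintro t ⟨σ, rfl⟩
      exact F.min'_le _ (Finset.mem_image_of_mem _ (Finset.mem_univ σ))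
end
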